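/- arXiv:1703.04185 — 4 statements merged into one kernel-verified Lean document; each statement's English description precedes it below -/
import Mathlib

section
/- Let x_1, …, x_r be points in ℝ^d and let g ∈ ℝ^r. Then g is a convex vector with respect to x_1, …, x_r (i.e., there exists a convex function f : ℝ^d → ℝ with f(x_i) = g_i for all i = 1, …, r) if and only if there exist vectors a_1, …, a_r ∈ ℝ^d and scalars b_1, …, b_r ∈ ℝ such that ⟨a_i, x_i⟩ + b_i = g_i for every i ∈ {1, …, r} and ⟨a_i, x_j⟩ + b_i ≤ g_j for every i ∈ {1, …, r} and every j ≠ i, j ∈ {1, …, r}. -/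
open RealInnerProductSpace

lemma exists_subgradient_aux (d : ℕ) (f : EuclideanSpace ℝ (Fin d) → ℝ)
    (hf : ConvexOn ℝ Set.univ f) (x₀ : EuclideanSpace ℝ (Fin d)) :
    ∃ a : EuclideanSpace ℝ (Fin d), ∀ y, ⟪a, y⟫ - ⟪a, x₀⟫ + f x₀ ≤ f y := by
  have hcont : Continuous f :=
    continuousOn_univ.mp (hf.continuousOn isOpen_univ)
  set S : Set (EuclideanSpace ℝ (Fin d) × ℝ) := {p | f p.1 < p.2} with hS
  have hSopen : IsOpen S := isOpen_lt (hcont.comp continuous_fst) continuous_snd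
  have hSconv : Convex ℝ S := by
    rintro p hp q hq s t hs ht hst
    simp only [hS, Set.mem_setOf_eq] at hp hq ⊢
    have h1 : f (s • p.1 + t • q.1) ≤ s * f p.1 + t * f q.1 := by
      simpa using hf.2 (Set.mem_univ p.1) (Set.mem_univ q.1) hs ht hst
    have h2 : s * f p.1 + t * f q.1 < s * p.2 + t * q.2 := by
      rcases eq_or_lt_of_le hs with rfl | hs'
      · simp only [zero_add] at hst; subst hst
        simpa using hq
      · have := mul_lt_mul_of_pos_left hp hs'
        have h2 := mul_le_mul_of_nonneg_left hq.le ht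
        linarith
    calc f (s • p + t • q).1 = f (s • p.1 + t • q.1) := rfl
      _ ≤ s * f p.1 + t * f q.1 := h1
      _ < s * p.2 + t * q.2 := h2
      _ = (s • p + t • q).2 := by simp
  have hx₀ : (x₀, f x₀) ∉ S := by simp [hS]
  obtain ⟨φ, hφ⟩ := geometric_hahn_banach_open_point hSconv hSopen hx₀
  set c : ℝ := φ (0, 1) with hc
  have key : ∀ y : EuclideanSpace ℝ (Fin d), ∀ ε > 0, φ (y, f y + ε) < φ (x₀, f x₀) := by
    intro y ε hε
    exact hφ _ (by simp [hS, hε])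
  have hsplit : ∀ (y : EuclideanSpace ℝ (Fin d)) (t : ℝ),
      φ (y, t) = φ (y, 0) + t * c := by
    intro y t
    have : (y, t) = (y, (0:ℝ)) + t • ((0 : EuclideanSpace ℝ (Fin d)), (1:ℝ)) := by
      simp [Prod.ext_iff]
    rw [this, map_add, map_smul]
    simp [hc, mul_comm]
  have hcneg : c < 0 := by
    have h := key x₀ 1 one_pos
    rw [hsplit x₀ (f x₀ + 1), hsplit x₀ (f x₀)] at h
    nlinarith
  have hcp : 0 < -c := by linarith
  have hne : -c ≠ 0 := ne_of_gt hcp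
  have hineq : ∀ y, φ (y, 0) + (f y) * c ≤ φ (x₀, 0) + (f x₀) * c := by
    intro y
    by_contra h
    push_neg at h
    set δ : ℝ := (φ (y,0) + f y * c - (φ (x₀,0) + f x₀ * c)) / (-c) with hδ
    have hd : 0 < δ := div_pos (by linarith) hcp
    have hkey := key y δ hd
    have e1 : φ (y, f y + δ) = φ (y, 0) + (f y + δ) * c := hsplit y _
    rw [e1, hsplit x₀ (f x₀)] at hkey
    have hδc : δ * c = -(φ (y,0) + f y * c - (φ (x₀,0) + f x₀ * c)) := by
      rw [hδ]
      rw [div_mul_eq_mul_div, div_eq_iff hne]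
      ring
    nlinarith
  set ψ : EuclideanSpace ℝ (Fin d) →L[ℝ] ℝ :=
    (-c)⁻¹ • (φ.comp (ContinuousLinearMap.inl ℝ (EuclideanSpace ℝ (Fin d)) ℝ)) with hψ
  set a : EuclideanSpace ℝ (Fin d) := (InnerProductSpace.toDual ℝ _).symm ψ with ha
  refine ⟨a, fun y => ?_⟩
  have hay : ∀ z, ⟪a, z⟫ = ψ z := fun z => InnerProductSpace.toDual_symm_apply
  have hψy : ψ y = (-c)⁻¹ * φ (y, 0) := rfl
  have hψx : ψ x₀ = (-c)⁻¹ * φ (x₀, 0) := rfl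
  rw [hay, hay, hψy, hψx]
  have h := hineq y
  have h2 : φ (y,0) - φ (x₀,0) ≤ (f y - f x₀) * (-c) := by nlinarith
  have h3 : (φ (y,0) - φ (x₀,0)) / (-c) ≤ f y - f x₀ := (div_le_iff₀ hcp).mpr h2
  have h4 : (-c)⁻¹ * φ (y,0) - (-c)⁻¹ * φ (x₀,0) = (φ (y,0) - φ (x₀,0)) / (-c) := by
    ring
  linarith

/-- A vector `g ∈ ℝ^r` is convex with respect to points `x_1, …, x_r ∈ ℝ^d`
(i.e., there is a convex function `f : ℝ^d → ℝ` with `f (x i) = g i` for all `i`)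
if and only if there are `a_1, …, a_r ∈ ℝ^d` and `b_1, …, b_r ∈ ℝ` with
`⟨a i, x i⟩ + b i = g i` for all `i` and `⟨a i, x j⟩ + b i ≤ g j` for all `i` and `j ≠ i`. -/
theorem convex_vector_iff_linear_system (d r : ℕ)
    (x : Fin r → EuclideanSpace ℝ (Fin d)) (g : Fin r → ℝ) :
    (∃ f : EuclideanSpace ℝ (Fin d) → ℝ,
        ConvexOn ℝ Set.univ f ∧ ∀ i, f (x i) = g i) ↔
      (∃ (a : Fin r → EuclideanSpace ℝ (Fin d)) (b : Fin r → ℝ),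
        (∀ i, ⟪a i, x i⟫ + b i = g i) ∧
        (∀ i j, j ≠ i → ⟪a i, x j⟫ + b i ≤ g j)) := by
  constructor
  · rintro ⟨f, hf, hfg⟩
    choose a ha using fun i => exists_subgradient_aux d f hf (x i)
    refine ⟨a, fun i => g i - ⟪a i, x i⟫, fun i => by ring, fun i j _ => ?_⟩
    have := ha i (x j)
    rw [hfg i, hfg j] at this
    dsimp only
    linarith
  · rintro ⟨a, b, heq, hle⟩
    rcases Nat.eq_zero_or_pos r with hr | hr
    · subst hr
      exact ⟨0, convexOn_const 0 convex_univ, fun i => i.elim0⟩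
    haveI : Nonempty (Fin r) := ⟨⟨0, hr⟩⟩
    set f : EuclideanSpace ℝ (Fin d) → ℝ :=
      fun y => Finset.univ.sup' Finset.univ_nonempty (fun i => ⟪a i, y⟫ + b i) with hfdef
    have hterm : ∀ (i : Fin r) (y), ⟪a i, y⟫ + b i ≤ f y := by
      intro i y
      exact Finset.le_sup' (fun i => ⟪a i, y⟫ + b i) (Finset.mem_univ i)
    refine ⟨f, ⟨convex_univ, ?_⟩, ?_⟩
    · intro p _ q _ s t hs ht hst
      simp only [smul_eq_mul]
      apply Finset.sup'_le
      intro i _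
      have h1 : ⟪a i, p⟫ + b i ≤ f p := hterm i p
      have h2 : ⟪a i, q⟫ + b i ≤ f q := hterm i q
      have h3 : ⟪a i, s • p + t • q⟫ = s * ⟪a i, p⟫ + t * ⟪a i, q⟫ := by
        rw [inner_add_right, real_inner_smul_right, real_inner_smul_right]
      rw [h3]
      have e1 := mul_le_mul_of_nonneg_left h1 hs
      have e2 := mul_le_mul_of_nonneg_left h2 ht
      have e3 : s * b i + t * b i = b i := by rw [← add_mul, hst, one_mul]
      nlinarith [e1, e2, e3]
    · intro j
      apply le_antisymm
      · apply Finset.sup'_le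
        intro i _
        rcases eq_or_ne i j with rfl | hij
        · exact (heq i).le
        · exact hle i j (Ne.symm hij)
      · rw [← heq j]
        exact hterm j (x j)
end

section
/- Let x_1, …, x_r be pairwise distinct points in ℝ^d and let C ⊆ ℝ^r be the set of all convex vectors with respect to x_1, …, x_r. Then a vector g ∈ ℝ^r lies in the topological interior of C if and only if there exists a strictly convex function f : ℝ^d → ℝ with f(x_i) = g_i for all i = 1, …, r. -/
open Set

-- strict convexity of y ↦ ε * ‖y‖^2 on an inner product space
lemma strictConvexOn_smul_sq_norm {E : Type*} [NormedAddCommGroup E]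
    [InnerProductSpace ℝ E] {ε : ℝ} (hε : 0 < ε) :
    StrictConvexOn ℝ Set.univ (fun y : E => ε * ‖y‖ ^ 2) := by
  refine ⟨convex_univ, fun p _ q _ hpq a b ha hb hab => ?_⟩
  have key : ‖a • p + b • q‖ ^ 2
      = a * ‖p‖ ^ 2 + b * ‖q‖ ^ 2 - a * b * ‖p - q‖ ^ 2 := by
    have h1 := norm_add_sq_real (a • p) (b • q)
    have h2 := norm_sub_sq_real p q
    have h3 : (inner ℝ (a • p) (b • q) : ℝ) = a * b * inner ℝ p q := by
      rw [real_inner_smul_left, real_inner_smul_right]; ring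
    rw [h1, h3, norm_smul, norm_smul, Real.norm_eq_abs, Real.norm_eq_abs,
      abs_of_nonneg ha.le, abs_of_nonneg hb.le, h2]
    have hb' : b = 1 - a := by linarith
    subst hb'
    ring
  have hne : 0 < ‖p - q‖ ^ 2 := by
    have h : p - q ≠ 0 := sub_ne_zero.2 hpq
    exact pow_pos (norm_pos_iff.mpr h) 2
  simp only [smul_eq_mul]
  rw [key]
  nlinarith [mul_pos (mul_pos ha hb) hne]

-- existence of an affine minorant touching at a point (subgradient)
lemma exists_subgradient {E : Type*} [NormedAddCommGroup E] [NormedSpace ℝ E]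
    [FiniteDimensional ℝ E] {f : E → ℝ} (hf : ConvexOn ℝ Set.univ f) (z : E) :
    ∃ B : E →L[ℝ] ℝ, ∀ y, f z + (B y - B z) ≤ f y := by
  have hcont : Continuous f := by
    rw [← continuousOn_univ]
    exact hf.continuousOn isOpen_univ
  set S : Set (E × ℝ) := {p | f p.1 < p.2} with hS
  have hSopen : IsOpen S := isOpen_lt (hcont.comp continuous_fst) continuous_snd
  have hSconv : Convex ℝ S := by
    intro p hp q hq a b ha hb hab
    simp only [hS, mem_setOf_eq] at hp hq ⊢
    have h1 : f ((a • p + b • q).1) ≤ a * f p.1 + b * f q.1 :=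
      hf.2 (mem_univ p.1) (mem_univ q.1) ha hb hab
    have h3 : (a • p + b • q).2 = a * p.2 + b * q.2 := rfl
    rw [h3]
    refine lt_of_le_of_lt h1 ?_
    rcases eq_or_lt_of_le ha with ha0 | ha0
    · have hb1 : b = 1 := by linarith
      have ha1 : a = 0 := ha0.symm
      rw [ha1, hb1]; simpa using hq
    · have t1 : a * f p.1 < a * p.2 := by
        exact mul_lt_mul_of_pos_left hp ha0
      have t2 : b * f q.1 ≤ b * q.2 := mul_le_mul_of_nonneg_left hq.le hb
      linarith
  have hz : (z, f z) ∉ S := by simp [hS]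
  obtain ⟨φ, hφ⟩ := geometric_hahn_banach_point_open hSconv hSopen hz
  set c : ℝ := φ (0, 1) with hcdef
  set L : E →L[ℝ] ℝ := φ.comp (ContinuousLinearMap.inl ℝ E ℝ) with hLdef
  have hkey : ∀ (y : E) (t : ℝ), φ (y, t) = L y + t * c := by
    intro y t
    have he : (y, t) = (y, (0:ℝ)) + t • ((0:E), (1:ℝ)) := by
      simp [Prod.ext_iff]
    rw [he, map_add, map_smul, smul_eq_mul]
    rfl
  have hc : 0 < c := by
    have h := hφ (z, f z + 1) (by simp [hS])
    rw [hkey, hkey] at h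
    linarith
  have main : ∀ y, L z + f z * c ≤ L y + f y * c := by
    intro y
    by_contra h
    push_neg at h
    set δ := (L z + f z * c - (L y + f y * c)) / c with hδdef
    have hδ : 0 < δ := div_pos (by linarith) hc
    have h2 := hφ (y, f y + δ) (by simp [hS]; linarith)
    rw [hkey, hkey] at h2
    have hδc : δ * c = L z + f z * c - (L y + f y * c) :=
      div_mul_cancel₀ _ hc.ne'
    nlinarith
  refine ⟨(-(c⁻¹)) • L, fun y => ?_⟩
  have h := main y
  have hdiff : ((-(c⁻¹)) • L) y - ((-(c⁻¹)) • L) z = (L z - L y) / c := by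
    simp only [ContinuousLinearMap.smul_apply, smul_eq_mul]
    field_simp
    ring
  rw [hdiff]
  have h2 : (L z - L y) / c ≤ f y - f z := by
    rw [div_le_iff₀ hc]
    nlinarith
  linarith


/-- For pairwise distinct points `x_1, …, x_r ∈ ℝ^d`, a vector `g ∈ ℝ^r` lies in the
topological interior of the cone `C` of convex vectors if and only if there is a strictly
convex function `f : ℝ^d → ℝ` with `f (x i) = g i` for all `i`. -/
theorem mem_interior_convex_cone_iff_strictly_convex (d r : ℕ)
    (x : Fin r → EuclideanSpace ℝ (Fin d)) (hx : Function.Injective x)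
    (C : Set (Fin r → ℝ))
    (hC : C = {g : Fin r → ℝ | ∃ f : EuclideanSpace ℝ (Fin d) → ℝ,
        ConvexOn ℝ Set.univ f ∧ ∀ i, f (x i) = g i})
    (g : Fin r → ℝ) :
    g ∈ interior C ↔
      ∃ f : EuclideanSpace ℝ (Fin d) → ℝ,
        StrictConvexOn ℝ Set.univ f ∧ ∀ i, f (x i) = g i := by
  constructor
  · -- interior → strictly convex interpolant
    intro hg
    set q : Fin r → ℝ := fun i => ‖x i‖ ^ 2 with hqdef
    obtain ⟨δ, hδ, hball⟩ := Metric.isOpen_iff.1 isOpen_interior g hg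
    set ε : ℝ := δ / (2 * (‖q‖ + 1)) with hεdef
    have hq1 : (0:ℝ) < ‖q‖ + 1 := by positivity
    have hε : 0 < ε := by positivity
    have hmem : g - ε • q ∈ C := by
      apply interior_subset
      apply hball
      rw [Metric.mem_ball, dist_eq_norm]
      have he : g - ε • q - g = -(ε • q) := by abel
      rw [he, norm_neg, norm_smul, Real.norm_eq_abs, abs_of_pos hε]
      have h2 : ε * (‖q‖ + 1) = δ / 2 := by
        rw [hεdef]; field_simp
      nlinarith [norm_nonneg q]
    rw [hC] at hmem
    obtain ⟨f0, hf0, hf0g⟩ := hmem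
    refine ⟨fun y => f0 y + ε * ‖y‖ ^ 2,
      hf0.add_strictConvexOn (strictConvexOn_smul_sq_norm hε), fun i => ?_⟩
    have h := hf0g i
    simp only [Pi.sub_apply, Pi.smul_apply, smul_eq_mul] at h
    simp only []
    rw [h, hqdef]
    ring
  · -- strictly convex interpolant → interior
    rintro ⟨f, hf, hfg⟩
    by_cases hr : r = 0
    · subst hr
      have hCu : C = Set.univ := by
        apply Set.eq_univ_of_forall
        intro g'
        rw [hC]
        exact ⟨fun _ => 0, convexOn_const 0 convex_univ, fun i => i.elim0⟩
      rw [hCu, interior_univ]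
      trivial
    · have hne : Nonempty (Fin r) := ⟨⟨0, Nat.pos_of_ne_zero hr⟩⟩
      choose B hB using fun i => exists_subgradient hf.convexOn (x i)
      have hstrict : ∀ i j, i ≠ j → g i + (B i (x j) - B i (x i)) < g j := by
        intro i j hij
        have hle : g i + (B i (x j) - B i (x i)) ≤ g j := by
          have h := hB i (x j)
          rw [hfg i, hfg j] at h
          exact h
        rcases eq_or_lt_of_le hle with heq | h
        swap
        · exact h
        exfalso
        set m : EuclideanSpace ℝ (Fin d) := (2⁻¹ : ℝ) • x i + (2⁻¹ : ℝ) • x j with hm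
        have hxij : x i ≠ x j := fun h => hij (hx h)
        have h1 : f m < (2⁻¹ : ℝ) * f (x i) + (2⁻¹ : ℝ) * f (x j) := by
          have := hf.2 (Set.mem_univ (x i)) (Set.mem_univ (x j)) hxij
            (by norm_num : (0:ℝ) < 2⁻¹) (by norm_num : (0:ℝ) < 2⁻¹) (by norm_num)
          simpa [smul_eq_mul] using this
        have h2 : f (x i) + (B i m - B i (x i)) ≤ f m := hB i m
        have h3 : B i m = (2⁻¹ : ℝ) * B i (x i) + (2⁻¹ : ℝ) * B i (x j) := by
          rw [hm, map_add, map_smul, map_smul]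
          simp [smul_eq_mul]
        rw [hfg i, hfg j] at h1
        rw [hfg i, h3] at h2
        linarith
      set w : Fin r × Fin r → ℝ := fun p =>
        if p.1 = p.2 then 1 else g p.2 - (g p.1 + (B p.1 (x p.2) - B p.1 (x p.1))) with hwdef
      have hPne : (Finset.univ : Finset (Fin r × Fin r)).Nonempty := Finset.univ_nonempty
      set ε : ℝ := Finset.univ.inf' hPne w with hεdef
      have hεpos : 0 < ε := by
        rw [hεdef, Finset.lt_inf'_iff]
        intro p _
        by_cases hp : p.1 = p.2
        · simp [hwdef, hp]
        · have := hstrict p.1 p.2 hp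
          simp only [hwdef, hp, if_false]
          linarith
      rw [mem_interior]
      refine ⟨Metric.ball g (ε/2), ?_, Metric.isOpen_ball,
        Metric.mem_ball_self (by linarith)⟩
      intro g' hg'
      have hclose : ∀ i, |g' i - g i| < ε/2 := by
        intro i
        have h1 : dist (g' i) (g i) ≤ dist g' g := dist_le_pi_dist g' g i
        have h2 : dist g' g < ε/2 := hg'
        rw [Real.dist_eq] at h1
        linarith
      rw [hC]
      have hIne : (Finset.univ : Finset (Fin r)).Nonempty := Finset.univ_nonempty
      refine ⟨fun y => Finset.univ.sup' hIne (fun i => g' i + (B i y - B i (x i))),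
        ⟨convex_univ, ?_⟩, ?_⟩
      · intro p _ q _ a b ha hb hab
        simp only [smul_eq_mul]
        apply Finset.sup'_le
        intro i _
        have hBi : B i (a • p + b • q) = a * B i p + b * B i q := by
          rw [map_add, map_smul, map_smul]
          simp [smul_eq_mul]
        have expand : g' i + (B i (a • p + b • q) - B i (x i))
            = a * (g' i + (B i p - B i (x i))) + b * (g' i + (B i q - B i (x i))) := by
          rw [hBi]
          linear_combination (g' i - B i (x i)) * hab.symm
        rw [expand]
        have h1 : g' i + (B i p - B i (x i))
            ≤ Finset.univ.sup' hIne (fun k => g' k + (B k p - B k (x k))) :=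
          Finset.le_sup' (fun k => g' k + (B k p - B k (x k))) (Finset.mem_univ i)
        have h2 : g' i + (B i q - B i (x i))
            ≤ Finset.univ.sup' hIne (fun k => g' k + (B k q - B k (x k))) :=
          Finset.le_sup' (fun k => g' k + (B k q - B k (x k))) (Finset.mem_univ i)
        exact add_le_add (mul_le_mul_of_nonneg_left h1 ha)
          (mul_le_mul_of_nonneg_left h2 hb)
      · intro j
        apply le_antisymm
        · apply Finset.sup'_le
          intro i _
          by_cases hij : i = j
          · subst hij
            simp
          · have hw : ε ≤ w (i, j) := by
              rw [hεdef]
              exact Finset.inf'_le w (Finset.mem_univ (i, j))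
            have hw2 : w (i, j) = g j - (g i + (B i (x j) - B i (x i))) := by
              simp [hwdef, hij]
            have hci := hclose i
            have hcj := hclose j
            rw [abs_lt] at hci hcj
            have : g i + (B i (x j) - B i (x i)) ≤ g j - ε := by
              rw [hw2] at hw
              linarith
            linarith
        · have h := Finset.le_sup' (fun i => g' i + (B i (x j) - B i (x i)))
            (Finset.mem_univ j)
          simp only [sub_self, add_zero] at h
          exact h
end

section
/- Let Λ_a, Λ_b be positive definite r × r real matrices such that Λ_b^{−1} − Λ_a^{−1} is positive semidefinite, and let μ_a, μ_b ∈ ℝ^r. Let φ_a and φ_b denote the multivariate Gaussian densities N(μ_a, Λ_a) and N(μ_b, Λ_b) on ℝ^r, and let L(y) = φ_b(y)/φ_a(y). If Y is a random vector with law N(μ_a, Λ_a), then for every Borel set B ⊆ ℝ^r, E[1{Y ∈ B} L(Y)] equals the N(μ_b, Λ_b)-probability of B, and moreover E[L(Y)²] < ∞ (so the estimator 1{Y ∈ B} L(Y) has finite variance). -/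
open MeasureTheory Matrix

/-- The multivariate Gaussian density on `ℝ^r` with mean `μ` and covariance `Λ`. -/
noncomputable def gaussianPdf (r : ℕ) (μ : Fin r → ℝ) (Λ : Matrix (Fin r) (Fin r) ℝ)
    (y : Fin r → ℝ) : ℝ :=
  (2 * Real.pi) ^ (-(r : ℝ) / 2) * Λ.det ^ (-(1 : ℝ) / 2) *
    Real.exp (-(1 / 2) * ((y - μ) ⬝ᵥ (Λ⁻¹ *ᵥ (y - μ))))

lemma quad_cont {r : ℕ} (M : Matrix (Fin r) (Fin r) ℝ) (μ : Fin r → ℝ) :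
    Continuous fun y : Fin r → ℝ => (y - μ) ⬝ᵥ (M *ᵥ (y - μ)) := by
  simp only [dotProduct, mulVec]
  exact continuous_finset_sum _ fun i _ =>
    (((continuous_apply i).sub continuous_const).mul
      (continuous_finset_sum _ fun j _ =>
        continuous_const.mul ((continuous_apply j).sub continuous_const)))

lemma gaussianPdf_cont {r : ℕ} (μ : Fin r → ℝ) (Λ : Matrix (Fin r) (Fin r) ℝ) :
    Continuous (gaussianPdf r μ Λ) := by
  unfold gaussianPdf
  exact continuous_const.mul (Real.continuous_exp.comp
    (continuous_const.mul (quad_cont _ _)))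

lemma gaussianPdf_pos {r : ℕ} (μ : Fin r → ℝ) {Λ : Matrix (Fin r) (Fin r) ℝ}
    (hΛ : Λ.PosDef) (y : Fin r → ℝ) : 0 < gaussianPdf r μ Λ y := by
  unfold gaussianPdf
  exact mul_pos (mul_pos (Real.rpow_pos_of_pos (by positivity) _)
    (Real.rpow_pos_of_pos hΛ.det_pos _)) (Real.exp_pos _)

lemma quad_lower_bound {r : ℕ} {M : Matrix (Fin r) (Fin r) ℝ} (hM : M.PosDef) :
    ∃ ε > 0, ∀ x : Fin r → ℝ, ε * ∑ i, x i ^ 2 ≤ x ⬝ᵥ (M *ᵥ x) := by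
  have hpos : ∀ x : Fin r → ℝ, x ≠ 0 → 0 < x ⬝ᵥ (M *ᵥ x) := by
    intro x hx
    simpa using hM.dotProduct_mulVec_pos hx
  have hnonneg : ∀ x : Fin r → ℝ, 0 ≤ x ⬝ᵥ (M *ᵥ x) := by
    intro x
    rcases eq_or_ne x 0 with h | h
    · simp [h]
    · exact (hpos x h).le
  have hcont : Continuous fun x : Fin r → ℝ => x ⬝ᵥ (M *ᵥ x) := by
    simp only [dotProduct, mulVec]
    exact continuous_finset_sum _ fun i _ =>
      ((continuous_apply i).mul
        (continuous_finset_sum _ fun j _ => continuous_const.mul (continuous_apply j)))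
  rcases Nat.eq_zero_or_pos r with hr | hr
  · refine ⟨1, one_pos, fun x => ?_⟩
    subst hr
    simpa using hnonneg x
  · set S : Set (Fin r → ℝ) := {x | ∑ i, x i ^ 2 = 1} with hS
    have hclosed : IsClosed S :=
      isClosed_eq (continuous_finset_sum _ fun i _ => (continuous_apply i).pow 2)
        continuous_const
    have hbdd : Bornology.IsBounded S := by
      apply Metric.isBounded_iff_subset_closedBall 0 |>.2
      refine ⟨1, fun x hx => ?_⟩
      simp only [Metric.mem_closedBall, dist_zero_right]
      rw [pi_norm_le_iff_of_nonneg zero_le_one]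
      intro i
      rw [Real.norm_eq_abs, abs_le]
      have h1 : x i ^ 2 ≤ 1 := by
        calc x i ^ 2 ≤ ∑ j, x j ^ 2 :=
          Finset.single_le_sum (fun j _ => sq_nonneg (x j)) (Finset.mem_univ i)
        _ = 1 := hx
      constructor <;> nlinarith
    have hcpt : IsCompact S := Metric.isCompact_of_isClosed_isBounded hclosed hbdd
    have hne : S.Nonempty := by
      refine ⟨Pi.single ⟨0, hr⟩ 1, ?_⟩
      simp only [hS, Set.mem_setOf_eq, Pi.single_apply]
      rw [Finset.sum_eq_single ⟨0, hr⟩]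
      · simp
      · intro b _ hb; simp [hb]
      · simp
    obtain ⟨x₀, hx₀S, hx₀min⟩ := hcpt.exists_isMinOn hne hcont.continuousOn
    have hx₀ne : x₀ ≠ 0 := by
      intro h
      rw [h] at hx₀S
      simp [hS] at hx₀S
    refine ⟨x₀ ⬝ᵥ (M *ᵥ x₀), hpos x₀ hx₀ne, fun x => ?_⟩
    rcases eq_or_lt_of_le (Finset.sum_nonneg fun i _ => sq_nonneg (x i)) with h0 | h0
    · have : x = 0 := by
        funext i
        have := (Finset.sum_eq_zero_iff_of_nonneg (fun j _ => sq_nonneg (x j))).1 h0.symm i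
          (Finset.mem_univ i)
        exact pow_eq_zero_iff (n := 2) (by norm_num) |>.1 this
      simp [this, ← h0]
    · set s : ℝ := ∑ i, x i ^ 2
      set c : ℝ := (Real.sqrt s)⁻¹ with hc
      have hs : 0 < s := h0
      have hcs : c ^ 2 * s = 1 := by
        rw [hc, ← Real.sqrt_inv, Real.sq_sqrt (by positivity), inv_mul_cancel₀ hs.ne']
      have hmem : c • x ∈ S := by
        simp only [hS, Set.mem_setOf_eq, Pi.smul_apply, smul_eq_mul, mul_pow]
        rw [← Finset.mul_sum]
        exact hcs
      have hval : (c • x) ⬝ᵥ (M *ᵥ (c • x)) = c ^ 2 * (x ⬝ᵥ (M *ᵥ x)) := by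
        rw [mulVec_smul, dotProduct_smul, smul_dotProduct]
        rw [smul_eq_mul, smul_eq_mul]
        ring
      have hmin : x₀ ⬝ᵥ (M *ᵥ x₀) ≤ (c • x) ⬝ᵥ (M *ᵥ (c • x)) := hx₀min hmem
      rw [hval] at hmin
      have hc2 : c ^ 2 = s⁻¹ := by
        field_simp at hcs ⊢
        nlinarith [hcs]
      rw [hc2] at hmin
      calc (x₀ ⬝ᵥ (M *ᵥ x₀)) * s ≤ s⁻¹ * (x ⬝ᵥ (M *ᵥ x)) * s :=
            mul_le_mul_of_nonneg_right hmin hs.le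
        _ = x ⬝ᵥ (M *ᵥ x) := by field_simp

lemma integrable_exp_of_quad_bound {r : ℕ} {g : (Fin r → ℝ) → ℝ} (hg : Continuous g)
    {ε K : ℝ} (hε : 0 < ε) (μ : Fin r → ℝ)
    (hbound : ∀ y, g y ≤ K - ε * ∑ i, (y i - μ i) ^ 2) :
    Integrable (fun y => Real.exp (g y)) (volume : Measure (Fin r → ℝ)) := by
  have h1 : Integrable (fun y : Fin r → ℝ => ∏ i, Real.exp (-ε * (y i - μ i) ^ 2)) volume :=
    Integrable.fintype_prod (f := fun i (x : ℝ) => Real.exp (-ε * (x - μ i) ^ 2))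
      (fun i => (integrable_exp_neg_mul_sq hε).comp_sub_right (μ i))
  have h2 := h1.const_mul (Real.exp K)
  refine h2.mono' hg.rexp.aestronglyMeasurable ?_
  filter_upwards with y
  rw [Real.norm_eq_abs, abs_of_pos (Real.exp_pos _)]
  calc Real.exp (g y) ≤ Real.exp (K - ε * ∑ i, (y i - μ i) ^ 2) :=
        Real.exp_le_exp.2 (hbound y)
    _ = Real.exp K * ∏ i, Real.exp (-ε * (y i - μ i) ^ 2) := by
        rw [Real.exp_sub, ← Real.exp_sum, div_eq_mul_inv, ← Real.exp_neg, Finset.mul_sum,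
          ← Finset.sum_neg_distrib]
        simp only [neg_mul]

lemma exponent_bound {r : ℕ} {Λa Λb : Matrix (Fin r) (Fin r) ℝ}
    (hΛb : Λb.PosDef) (hdiff : (Λb⁻¹ - Λa⁻¹).PosSemidef) (μa μb : Fin r → ℝ) :
    ∃ ε > 0, ∃ K : ℝ, ∀ y : Fin r → ℝ,
      -((y - μb) ⬝ᵥ (Λb⁻¹ *ᵥ (y - μb))) + (1 / 2) * ((y - μa) ⬝ᵥ (Λa⁻¹ *ᵥ (y - μa)))
        ≤ K - ε * ∑ i, (y i - μb i) ^ 2 := by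
  obtain ⟨ε, hε, hlb⟩ := quad_lower_bound hΛb.inv
  set M := Λb⁻¹ with hM
  set d : Fin r → ℝ := μb - μa with hd
  set cv : Fin r → ℝ := M *ᵥ d with hcv
  refine ⟨ε / 4, by positivity, (1 / ε) * ∑ i, cv i ^ 2 + (1 / 2) * (d ⬝ᵥ (M *ᵥ d)),
    fun y => ?_⟩
  set v : Fin r → ℝ := y - μb with hv
  have hsplit : y - μa = v + d := by
    funext i; simp only [hv, hd, Pi.sub_apply, Pi.add_apply]; ring
  have hsym : Mᵀ = M := by
    have h := hΛb.inv.1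
    rw [Matrix.IsHermitian] at h
    simpa using h
  have hswap : d ⬝ᵥ (M *ᵥ v) = v ⬝ᵥ cv := by
    rw [hcv, dotProduct_mulVec, ← mulVec_transpose, hsym, dotProduct_comm]
  have hqa : (y - μa) ⬝ᵥ (Λa⁻¹ *ᵥ (y - μa)) ≤ (y - μa) ⬝ᵥ (M *ᵥ (y - μa)) := by
    have h := hdiff.dotProduct_mulVec_nonneg (y - μa)
    simp only [star_trivial] at h
    rw [sub_mulVec, dotProduct_sub] at h
    linarith
  have hexpand : (v + d) ⬝ᵥ (M *ᵥ (v + d))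
      = v ⬝ᵥ (M *ᵥ v) + 2 * (v ⬝ᵥ cv) + d ⬝ᵥ (M *ᵥ d) := by
    rw [mulVec_add, dotProduct_add, add_dotProduct, add_dotProduct, hswap, hcv]
    ring
  have hlbv : ε * ∑ i, v i ^ 2 ≤ v ⬝ᵥ (M *ᵥ v) := hlb v
  have hcross : v ⬝ᵥ cv ≤ (ε / 4) * ∑ i, v i ^ 2 + (1 / ε) * ∑ i, cv i ^ 2 := by
    rw [dotProduct, Finset.mul_sum, Finset.mul_sum, ← Finset.sum_add_distrib]
    refine Finset.sum_le_sum fun i _ => ?_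
    have h1 : ε * (1 / ε) = 1 := by field_simp
    nlinarith [sq_nonneg (ε * v i - 2 * cv i), sq_nonneg (cv i), hε]
  have hvday : ∀ i, v i = y i - μb i := fun i => by simp [hv]
  calc -((y - μb) ⬝ᵥ (Λb⁻¹ *ᵥ (y - μb))) + (1 / 2) * ((y - μa) ⬝ᵥ (Λa⁻¹ *ᵥ (y - μa)))
      ≤ -(v ⬝ᵥ (M *ᵥ v)) + (1 / 2) * ((v + d) ⬝ᵥ (M *ᵥ (v + d))) := by
        rw [← hv, ← hM, ← hsplit]
        linarith [hqa]
    _ = -(1 / 2) * (v ⬝ᵥ (M *ᵥ v)) + v ⬝ᵥ cv + (1 / 2) * (d ⬝ᵥ (M *ᵥ d)) := by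
        rw [hexpand]; ring
    _ ≤ -(1 / 2) * (ε * ∑ i, v i ^ 2) + ((ε / 4) * ∑ i, v i ^ 2 + (1 / ε) * ∑ i, cv i ^ 2)
        + (1 / 2) * (d ⬝ᵥ (M *ᵥ d)) := by
        nlinarith [hlbv, hcross]
    _ ≤ (1 / ε) * ∑ i, cv i ^ 2 + (1 / 2) * (d ⬝ᵥ (M *ᵥ d))
        - (ε / 4) * ∑ i, (y i - μb i) ^ 2 := by
        have hsum : ∑ i, v i ^ 2 = ∑ i, (y i - μb i) ^ 2 :=
          Finset.sum_congr rfl fun i _ => by rw [hvday i]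
        rw [← hsum]
        nlinarith [hε, Finset.sum_nonneg fun i (_ : i ∈ Finset.univ) => sq_nonneg (v i)]

/-- Change of measure: if `Y ~ N(μ_a, Λ_a)` and `L = φ_b/φ_a` is the likelihood ratio of
`N(μ_b, Λ_b)` against `N(μ_a, Λ_a)`, where `Λ_b⁻¹ − Λ_a⁻¹` is positive semidefinite, then
`E[1{Y ∈ B} L(Y)]` is the `N(μ_b, Λ_b)`-probability of `B` for every Borel set `B`, and
`E[L(Y)²] < ∞`. -/
theorem change_of_measure_unbiased_finite_variance
    {Ω : Type*} [MeasurableSpace Ω] (P : Measure Ω) [IsProbabilityMeasure P]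
    (r : ℕ) (Λa Λb : Matrix (Fin r) (Fin r) ℝ) (hΛa : Λa.PosDef) (hΛb : Λb.PosDef)
    (hdiff : (Λb⁻¹ - Λa⁻¹).PosSemidef) (μa μb : Fin r → ℝ)
    (L : (Fin r → ℝ) → ℝ) (hL : ∀ y, L y = gaussianPdf r μb Λb y / gaussianPdf r μa Λa y)
    (Y : Ω → Fin r → ℝ) (hYmeas : Measurable Y)
    (hYlaw : Measure.map Y P = volume.withDensity fun y => ENNReal.ofReal (gaussianPdf r μa Λa y)) :
    (∀ B : Set (Fin r → ℝ), MeasurableSet B →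
      ∫ ω, Set.indicator B (fun _ => (1 : ℝ)) (Y ω) * L (Y ω) ∂P
        = ((volume.withDensity fun y => ENNReal.ofReal (gaussianPdf r μb Λb y)) B).toReal) ∧
    ∫⁻ ω, ENNReal.ofReal ((L (Y ω)) ^ 2) ∂P < ⊤ := by
  set φa := gaussianPdf r μa Λa with hφa_def
  set φb := gaussianPdf r μb Λb with hφb_def
  have hφa_pos : ∀ y, 0 < φa y := gaussianPdf_pos μa hΛa
  have hφb_pos : ∀ y, 0 < φb y := gaussianPdf_pos μb hΛb
  have hφa_cont : Continuous φa := gaussianPdf_cont μa Λa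
  have hφb_cont : Continuous φb := gaussianPdf_cont μb Λb
  have hLcont : Continuous L := by
    have hfun : L = fun y => φb y / φa y := funext hL
    rw [hfun]
    exact hφb_cont.div hφa_cont fun y => (hφa_pos y).ne'
  have hLmeas : Measurable L := hLcont.measurable
  have hφa_enn : Measurable fun y => ENNReal.ofReal (φa y) :=
    hφa_cont.measurable.ennreal_ofReal
  have hLφa : ∀ y, L y * φa y = φb y := fun y => by
    rw [hL, div_mul_cancel₀ _ (hφa_pos y).ne']
  constructor
  · intro B hB
    have hfmeas : Measurable fun y => B.indicator (fun _ => (1 : ℝ)) y * L y :=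
      (measurable_const.indicator hB).mul hLmeas
    have hnn : 0 ≤ᵐ[volume.withDensity fun y => ENNReal.ofReal (φa y)]
        fun y => B.indicator (fun _ => (1 : ℝ)) y * L y := by
      filter_upwards with y
      refine mul_nonneg (Set.indicator_nonneg (fun _ _ => zero_le_one) y) ?_
      rw [hL]
      exact div_nonneg (hφb_pos y).le (hφa_pos y).le
    rw [← integral_map hYmeas.aemeasurable hfmeas.aestronglyMeasurable, hYlaw,
      integral_eq_lintegral_of_nonneg_ae hnn hfmeas.aestronglyMeasurable]
    congr 1
    rw [lintegral_withDensity_eq_lintegral_mul _ hφa_enn hfmeas.ennreal_ofReal]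
    have hpt : ∀ y, ((fun y => ENNReal.ofReal (φa y)) * fun y =>
        ENNReal.ofReal (B.indicator (fun _ => (1 : ℝ)) y * L y)) y
        = B.indicator (fun y => ENNReal.ofReal (φb y)) y := by
      intro y
      by_cases hy : y ∈ B
      · simp only [Pi.mul_apply, Set.indicator_of_mem hy, one_mul]
        rw [← ENNReal.ofReal_mul (hφa_pos y).le, mul_comm (φa y), hLφa]
      · simp [Set.indicator_of_notMem hy]
    rw [lintegral_congr hpt, lintegral_indicator hB, withDensity_apply _ hB]
  · have hL2meas : Measurable fun y => ENNReal.ofReal (L y ^ 2) :=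
      (hLmeas.pow_const 2).ennreal_ofReal
    rw [← lintegral_map hL2meas hYmeas, hYlaw,
      lintegral_withDensity_eq_lintegral_mul _ hφa_enn hL2meas]
    obtain ⟨ε, hε, K, hbound⟩ := exponent_bound hΛb hdiff μa μb
    set ca : ℝ := (2 * Real.pi) ^ (-(r : ℝ) / 2) * Λa.det ^ (-(1 : ℝ) / 2) with hca
    set cb : ℝ := (2 * Real.pi) ^ (-(r : ℝ) / 2) * Λb.det ^ (-(1 : ℝ) / 2) with hcb
    have hca_pos : 0 < ca :=
      mul_pos (Real.rpow_pos_of_pos (by positivity) _)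
        (Real.rpow_pos_of_pos hΛa.det_pos _)
    have hform : ∀ y, φa y * L y ^ 2
        = (cb ^ 2 / ca) * Real.exp (-((y - μb) ⬝ᵥ (Λb⁻¹ *ᵥ (y - μb)))
            + (1 / 2) * ((y - μa) ⬝ᵥ (Λa⁻¹ *ᵥ (y - μa)))) := by
      intro y
      rw [hL y]
      have h1 : φa y * (φb y / φa y) ^ 2 = φb y ^ 2 / φa y := by
        field_simp [(hφa_pos y).ne']
      rw [h1, hφa_def, hφb_def]
      unfold gaussianPdf
      rw [← hca, ← hcb, mul_pow, sq (Real.exp _), ← Real.exp_add, mul_div_mul_comm,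
        ← Real.exp_sub]
      congr 1
      ring
    have hint : Integrable (fun y => φa y * L y ^ 2) volume := by
      have hgc : Continuous fun y : Fin r → ℝ =>
          -((y - μb) ⬝ᵥ (Λb⁻¹ *ᵥ (y - μb))) + (1 / 2) * ((y - μa) ⬝ᵥ (Λa⁻¹ *ᵥ (y - μa))) :=
        (quad_cont (Λb⁻¹) μb).neg.add (continuous_const.mul (quad_cont (Λa⁻¹) μa))
      have := (integrable_exp_of_quad_bound hgc hε μb hbound).const_mul (cb ^ 2 / ca)
      exact this.congr (Filter.Eventually.of_forall fun y => (hform y).symm)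
    calc ∫⁻ y, ((fun y => ENNReal.ofReal (φa y)) * fun y => ENNReal.ofReal (L y ^ 2)) y
        = ∫⁻ y, ENNReal.ofReal (φa y * L y ^ 2) := by
          refine lintegral_congr fun y => ?_
          simp only [Pi.mul_apply]
          rw [← ENNReal.ofReal_mul (hφa_pos y).le]
      _ < ⊤ := hint.lintegral_lt_top
end

section
/- Let Λ_a, Λ_b, Γ be positive definite r × r real matrices with Λ_b^{−1} = Λ_a^{−1} + Γ^{−1}, and let μ_a, μ_b ∈ ℝ^r. Let φ_a and φ_b be the multivariate Gaussian densities N(μ_a, Λ_a) and N(μ_b, Λ_b) on ℝ^r, and set v = Λ_b^{−1} μ_b − Λ_a^{−1} μ_a. Then sup_{y ∈ ℝ^r} φ_b(y)/φ_a(y) = √( (det Λ_a / det Λ_b) · exp( vᵀ Γ v + μ_aᵀ Λ_a^{−1} μ_a − μ_bᵀ Λ_b^{−1} μ_b ) ). -/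
/-!
The ratio `φ_b / φ_a` is the exponential of a quadratic function of `y` whose quadratic part is
`-½ yᵀ (Λ_b⁻¹ - Λ_a⁻¹) y = -½ yᵀ Γ⁻¹ y`. Completing the square around `y₀ = Γ v` writes the ratio
as `√(det Λ_a / det Λ_b) · exp(E/2) · exp(-½ (y - y₀)ᵀ Γ⁻¹ (y - y₀))`, where `E` is the exponent in
the claimed formula; since `Γ⁻¹` is positive definite this is at most its value at `y₀`.
-/

open Matrix

namespace Matrix

variable {n R : Type*} [Fintype n] [CommRing R]

theorem IsSymm.dotProduct_mulVec_comm {A : Matrix n n R} (hA : A.IsSymm) (x y : n → R) :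
    x ⬝ᵥ A *ᵥ y = y ⬝ᵥ A *ᵥ x := by
  rw [dotProduct_mulVec, ← mulVec_transpose, hA.eq, dotProduct_comm]

theorem dotProduct_mulVec_sub_dotProduct_mulVec_completeSquare
    {A B C : Matrix n n R} (hA : A.IsSymm) (hC : C.IsSymm) (hB : B = A + C) {μa μb y₀ : n → R}
    (hy₀ : C *ᵥ y₀ = B *ᵥ μb - A *ᵥ μa) (y : n → R) :
    (y - μb) ⬝ᵥ B *ᵥ (y - μb) - (y - μa) ⬝ᵥ A *ᵥ (y - μa) =
      (y - y₀) ⬝ᵥ C *ᵥ (y - y₀) - (y₀ ⬝ᵥ C *ᵥ y₀ + μa ⬝ᵥ A *ᵥ μa - μb ⬝ᵥ B *ᵥ μb) := by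
  have hBs : B.IsSymm := hB ▸ hA.add hC
  have hyBy : y ⬝ᵥ B *ᵥ y = y ⬝ᵥ A *ᵥ y + y ⬝ᵥ C *ᵥ y := by
    rw [hB, add_mulVec, dotProduct_add]
  have hyCy₀ : y ⬝ᵥ C *ᵥ y₀ = y ⬝ᵥ B *ᵥ μb - y ⬝ᵥ A *ᵥ μa := by
    rw [hy₀, dotProduct_sub]
  simp only [mulVec_sub, dotProduct_sub, sub_dotProduct]
  rw [hBs.dotProduct_mulVec_comm μb y, hA.dotProduct_mulVec_comm μa y,
    hC.dotProduct_mulVec_comm y₀ y]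
  linear_combination hyBy + 2 * hyCy₀

theorem iSup_mul_exp_neg_half_dotProduct_mulVec {C : Matrix n n ℝ} (hC : C.PosSemidef) {S : ℝ}
    (hS : 0 ≤ S) (y₀ : n → ℝ) :
    ⨆ y, S * Real.exp (-(1 / 2) * ((y - y₀) ⬝ᵥ C *ᵥ (y - y₀))) = S := by
  have hle : ∀ y, S * Real.exp (-(1 / 2) * ((y - y₀) ⬝ᵥ C *ᵥ (y - y₀))) ≤ S := fun y => by
    have hq : 0 ≤ (y - y₀) ⬝ᵥ C *ᵥ (y - y₀) := by
      simpa using hC.dotProduct_mulVec_nonneg (y - y₀)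
    exact mul_le_of_le_one_right hS (Real.exp_le_one_iff.mpr (by linarith))
  refine ciSup_eq_of_forall_le_of_forall_lt_exists_gt hle fun w hw => ⟨y₀, ?_⟩
  simpa using hw

end Matrix

theorem gaussianPdf_div_gaussianPdf {r : ℕ} {Λa Λb : Matrix (Fin r) (Fin r) ℝ}
    (hΛa : 0 < Λa.det) (hΛb : 0 < Λb.det) (μa μb y : Fin r → ℝ) :
    gaussianPdf r μb Λb y / gaussianPdf r μa Λa y =
      √(Λa.det / Λb.det) * Real.exp (-(1 / 2) *
        ((y - μb) ⬝ᵥ Λb⁻¹ *ᵥ (y - μb) - (y - μa) ⬝ᵥ Λa⁻¹ *ᵥ (y - μa))) := by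
  have hsqrt : √(Λa.det / Λb.det) = Λb.det ^ (-(1 : ℝ) / 2) / Λa.det ^ (-(1 : ℝ) / 2) := by
    rw [Real.sqrt_eq_rpow, Real.div_rpow hΛa.le hΛb.le, neg_div, Real.rpow_neg hΛa.le,
      Real.rpow_neg hΛb.le, div_inv_eq_mul, inv_mul_eq_div]
  have h2π : (2 * Real.pi) ^ (-(r : ℝ) / 2) ≠ 0 := (Real.rpow_pos_of_pos (by positivity) _).ne'
  have hdet : Λa.det ^ (-(1 : ℝ) / 2) ≠ 0 := (Real.rpow_pos_of_pos hΛa _).ne'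
  rw [gaussianPdf, gaussianPdf, hsqrt, mul_sub, Real.exp_sub]
  field_simp

/-- If `Λ_b⁻¹ = Λ_a⁻¹ + Γ⁻¹` with all three matrices positive definite and
`v = Λ_b⁻¹ μ_b − Λ_a⁻¹ μ_a`, then the supremum over `y ∈ ℝ^r` of the likelihood ratio
`φ_b(y)/φ_a(y)` equals
`√((det Λ_a/det Λ_b) · exp(vᵀ Γ v + μ_aᵀ Λ_a⁻¹ μ_a − μ_bᵀ Λ_b⁻¹ μ_b))`. -/
theorem sup_gaussian_likelihood_ratio_multivariate
    (r : ℕ) (Λa Λb Γ : Matrix (Fin r) (Fin r) ℝ)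
    (hΛa : Λa.PosDef) (hΛb : Λb.PosDef) (hΓ : Γ.PosDef)
    (hrel : Λb⁻¹ = Λa⁻¹ + Γ⁻¹) (μa μb : Fin r → ℝ)
    (v : Fin r → ℝ) (hv : v = Λb⁻¹ *ᵥ μb - Λa⁻¹ *ᵥ μa) :
    (⨆ y : Fin r → ℝ, gaussianPdf r μb Λb y / gaussianPdf r μa Λa y)
      = Real.sqrt ((Λa.det / Λb.det) *
          Real.exp (v ⬝ᵥ (Γ *ᵥ v) + μa ⬝ᵥ (Λa⁻¹ *ᵥ μa) - μb ⬝ᵥ (Λb⁻¹ *ᵥ μb))) := by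
  set E := v ⬝ᵥ (Γ *ᵥ v) + μa ⬝ᵥ (Λa⁻¹ *ᵥ μa) - μb ⬝ᵥ (Λb⁻¹ *ᵥ μb)
  have hΓv : Γ⁻¹ *ᵥ (Γ *ᵥ v) = v := by
    rw [mulVec_mulVec, nonsing_inv_mul _ hΓ.det_pos.ne'.isUnit, one_mulVec]
  have hE : Γ *ᵥ v ⬝ᵥ Γ⁻¹ *ᵥ (Γ *ᵥ v) + μa ⬝ᵥ Λa⁻¹ *ᵥ μa - μb ⬝ᵥ Λb⁻¹ *ᵥ μb = E := by
    rw [hΓv, dotProduct_comm]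
  have hratio : ∀ y, gaussianPdf r μb Λb y / gaussianPdf r μa Λa y =
      √(Λa.det / Λb.det) * Real.exp (E / 2) *
        Real.exp (-(1 / 2) * ((y - Γ *ᵥ v) ⬝ᵥ Γ⁻¹ *ᵥ (y - Γ *ᵥ v))) := fun y => by
    rw [gaussianPdf_div_gaussianPdf hΛa.det_pos hΛb.det_pos,
      dotProduct_mulVec_sub_dotProduct_mulVec_completeSquare
        (isHermitian_iff_isSymm.mp hΛa.inv.isHermitian)
        (isHermitian_iff_isSymm.mp hΓ.inv.isHermitian) hrel (by rw [hΓv, hv]),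
      hE, mul_assoc, ← Real.exp_add]
    ring_nf
  simp_rw [hratio]
  rw [iSup_mul_exp_neg_half_dotProduct_mulVec hΓ.inv.posSemidef (by positivity),
    Real.sqrt_mul (div_nonneg hΛa.det_pos.le hΛb.det_pos.le), Real.exp_half]
end
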